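/- arXiv:2605.31348 — 4 statements merged into one kernel-verified Lean document; each statement's English description precedes it below -/
import Mathlib

section
/- Define the Whitney spaces W⁰ := P₁(ℝ³) (affine polynomials), W¹ := {a + x × b : a, b ∈ ℝ³} (viewed as polynomial vector fields in the variable x), W² := {a + c x : a ∈ ℝ³, c ∈ ℝ}, and W³ := P₀(ℝ³) = ℝ (constants). Then the sequence ℝ ⊆ W⁰ →(grad) W¹ →(curl) W² →(div) W³ → 0 is exact: grad maps W⁰ into W¹ with kernel the constants, the kernel of curl on W¹ equals grad W⁰, the kernel of div on W² equals curl W¹, and div : W² → W³ is surjective. -/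
open MvPolynomial

/-- Polynomials on ℝ³. -/
abbrev RP3 := MvPolynomial (Fin 3) ℝ

/-- Gradient of a polynomial on ℝ³. -/
noncomputable def pgrad (φ : RP3) : Fin 3 → RP3 := fun i => pderiv i φ

/-- Curl of a polynomial vector field on ℝ³. -/
noncomputable def pcurl (v : Fin 3 → RP3) : Fin 3 → RP3 :=
  ![pderiv 1 (v 2) - pderiv 2 (v 1),
    pderiv 2 (v 0) - pderiv 0 (v 2),
    pderiv 0 (v 1) - pderiv 1 (v 0)]

/-- Divergence of a polynomial vector field on ℝ³. -/
noncomputable def pdiv (v : Fin 3 → RP3) : RP3 := ∑ i, pderiv i (v i)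

/-- The polynomial vector field `x × b` for a constant vector `b`. -/
noncomputable def xCross (b : Fin 3 → ℝ) : Fin 3 → RP3 :=
  ![X 1 * C (b 2) - X 2 * C (b 1),
    X 2 * C (b 0) - X 0 * C (b 2),
    X 0 * C (b 1) - X 1 * C (b 0)]

/-- Whitney space `W⁰`: affine polynomials. -/
def Whitney0 : Set RP3 := {φ | φ.totalDegree ≤ 1}

/-- Whitney space `W¹ = {a + x × b}`. -/
noncomputable def Whitney1 : Set (Fin 3 → RP3) :=
  {v | ∃ a b : Fin 3 → ℝ, v = fun i => C (a i) + xCross b i}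

/-- Whitney space `W² = {a + c x}`. -/
noncomputable def Whitney2 : Set (Fin 3 → RP3) :=
  {v | ∃ (a : Fin 3 → ℝ) (c : ℝ), v = fun i => C (a i) + C c * X i}

/-- Whitney space `W³`: constants. -/
def Whitney3 : Set RP3 := {φ | ∃ c : ℝ, φ = C c}

/- ### Auxiliary lemmas -/

lemma whitney_classify (d : Fin 3 →₀ ℕ) (hd : d 0 + d 1 + d 2 ≤ 1) :
    d = 0 ∨ d = Finsupp.single 0 1 ∨ d = Finsupp.single 1 1 ∨ d = Finsupp.single 2 1 := by
  have h : (d 0 = 0 ∧ d 1 = 0 ∧ d 2 = 0) ∨ (d 0 = 1 ∧ d 1 = 0 ∧ d 2 = 0)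
    ∨ (d 0 = 0 ∧ d 1 = 1 ∧ d 2 = 0) ∨ (d 0 = 0 ∧ d 1 = 0 ∧ d 2 = 1) := by omega
  rcases h with ⟨h0,h1,h2⟩|⟨h0,h1,h2⟩|⟨h0,h1,h2⟩|⟨h0,h1,h2⟩
  · left; ext i; fin_cases i <;> simp [h0,h1,h2]
  · right; left; ext i; fin_cases i <;> simp [Finsupp.single_apply, h0,h1,h2]
  · right; right; left; ext i; fin_cases i <;> simp [Finsupp.single_apply, h0,h1,h2]
  · right; right; right; ext i; fin_cases i <;> simp [Finsupp.single_apply, h0,h1,h2]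

lemma whitney_affine_rep (φ : RP3) (h : φ.totalDegree ≤ 1) :
    φ = C (coeff 0 φ) + C (coeff (Finsupp.single 0 1) φ) * X 0
      + C (coeff (Finsupp.single 1 1) φ) * X 1 + C (coeff (Finsupp.single 2 1) φ) * X 2 := by
  apply MvPolynomial.ext; intro d
  have hsum : ∀ e ∈ φ.support, e 0 + e 1 + e 2 ≤ 1 := by
    intro e he
    have := le_totalDegree he
    rw [Finsupp.sum_fintype _ _ (fun _ => rfl)] at this
    calc e 0 + e 1 + e 2 = ∑ i, e i := by rw [Fin.sum_univ_three]
    _ ≤ 1 := this.trans h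
  rcases Classical.em (d = 0 ∨ d = Finsupp.single 0 1 ∨ d = Finsupp.single 1 1
      ∨ d = Finsupp.single 2 1) with hc | hc
  · rcases hc with rfl|rfl|rfl|rfl <;>
      simp [coeff_add, coeff_C, coeff_C_mul, coeff_X', Finsupp.single_eq_single_iff,
        Finsupp.single_eq_zero, eq_comm]
  · have hd0 : coeff d φ = 0 := by
      by_contra hne
      exact hc (whitney_classify d (hsum d (mem_support_iff.mpr hne)))
    push_neg at hc
    obtain ⟨h1, h2, h3, h4⟩ := hc
    simp [coeff_add, coeff_C, coeff_C_mul, coeff_X', hd0, Ne.symm h1, Ne.symm h2,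
      Ne.symm h3, Ne.symm h4]

lemma whitney_pderiv_affine (φ : RP3) (h : φ.totalDegree ≤ 1) (i : Fin 3) :
    pderiv i φ = C (coeff (Finsupp.single i 1) φ) := by
  conv_lhs => rw [whitney_affine_rep φ h]
  fin_cases i <;> simp [pderiv_C_mul, pderiv_C]

lemma whitney_xCross_zero (i : Fin 3) : xCross (0 : Fin 3 → ℝ) i = 0 := by
  fin_cases i <;> simp [xCross]

lemma whitney_pcurl_w1 (a b : Fin 3 → ℝ) :
    pcurl (fun i => C (a i) + xCross b i) = fun i => (C (-2 * b i) : RP3) := by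
  funext i
  fin_cases i <;>
    simp [pcurl, xCross, pderiv_C_mul, pderiv_C, pderiv_mul, map_neg, map_mul, map_ofNat] <;>
    ring

lemma whitney_pcurl_const (c : Fin 3 → ℝ) :
    pcurl (fun i => (C (c i) : RP3)) = 0 := by
  funext i
  fin_cases i <;> simp [pcurl, pderiv_C]

lemma whitney_pdiv_const (c : Fin 3 → ℝ) :
    pdiv (fun i => (C (c i) : RP3)) = 0 := by
  simp [pdiv, pderiv_C]

lemma whitney_pdiv_w2 (a : Fin 3 → ℝ) (c : ℝ) :
    pdiv (fun i => C (a i) + C c * X i) = (C (3 * c) : RP3) := by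
  simp only [pdiv, Fin.sum_univ_three, map_add, pderiv_C_mul, pderiv_C, pderiv_X_self,
    zero_add, mul_one]
  rw [← map_add, ← map_add]
  congr 1
  ring

lemma whitney_sum_deg (a : Fin 3 → ℝ) :
    (C (a 0) * X 0 + C (a 1) * X 1 + C (a 2) * X 2 : RP3).totalDegree ≤ 1 := by
  have h : ∀ (x : ℝ) (i : Fin 3), (C x * X i : RP3).totalDegree ≤ 1 := by
    intro x i
    refine le_trans (totalDegree_mul _ _) ?_
    simp [totalDegree_C, totalDegree_X]
  refine le_trans (totalDegree_add _ _) (max_le (le_trans (totalDegree_add _ _)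
    (max_le (h _ _) (h _ _))) (h _ _))

lemma whitney_pgrad_sum (a : Fin 3 → ℝ) :
    pgrad (C (a 0) * X 0 + C (a 1) * X 1 + C (a 2) * X 2 : RP3) = fun i => C (a i) := by
  funext i
  fin_cases i <;> simp [pgrad, pderiv_C_mul, pderiv_C]

lemma whitney_C_inj {x : ℝ} (h : (C x : RP3) = 0) : x = 0 := by
  have := congrArg (coeff 0) h
  simpa [coeff_C] using this

/-- The local Whitney (lowest-order trimmed polynomial) de Rham complex
`ℝ ⊆ W⁰ → W¹ → W² → W³ → 0` is exact. -/
theorem whitney_complex_exact :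
    (∀ φ ∈ Whitney0, pgrad φ ∈ Whitney1 ∧ (pgrad φ = 0 ↔ ∃ c : ℝ, φ = C c))
    ∧ (∀ v ∈ Whitney1, pcurl v ∈ Whitney2 ∧ (pcurl v = 0 ↔ ∃ φ ∈ Whitney0, v = pgrad φ))
    ∧ (∀ v ∈ Whitney2, pdiv v ∈ Whitney3 ∧ (pdiv v = 0 ↔ ∃ w ∈ Whitney1, v = pcurl w))
    ∧ (∀ ψ ∈ Whitney3, ∃ v ∈ Whitney2, pdiv v = ψ) := by
  refine ⟨?_, ?_, ?_, ?_⟩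
  · -- grad part
    intro φ hφ
    have hg : pgrad φ = fun i => C (coeff (Finsupp.single i 1) φ) :=
      funext fun i => whitney_pderiv_affine φ hφ i
    constructor
    · exact ⟨fun i => coeff (Finsupp.single i 1) φ, 0, by
        rw [hg]; funext i; rw [whitney_xCross_zero i, add_zero]⟩
    · constructor
      · intro h0
        refine ⟨coeff 0 φ, ?_⟩
        have hz : ∀ i : Fin 3, coeff (Finsupp.single i 1) φ = 0 := by
          intro i
          apply whitney_C_inj
          rw [← whitney_pderiv_affine φ hφ i]
          exact congrFun h0 i
        rw [whitney_affine_rep φ hφ, hz 0, hz 1, hz 2]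
        simp
      · rintro ⟨c, rfl⟩
        funext i
        simp [pgrad, pderiv_C]
  · -- curl part
    rintro v ⟨a, b, rfl⟩
    rw [whitney_pcurl_w1]
    constructor
    · exact ⟨fun i => -2 * b i, 0, by funext i; simp⟩
    · constructor
      · intro h0
        have hb : ∀ i, b i = 0 := by
          intro i
          have := whitney_C_inj (congrFun h0 i)
          linarith
        refine ⟨C (a 0) * X 0 + C (a 1) * X 1 + C (a 2) * X 2, whitney_sum_deg a, ?_⟩
        rw [whitney_pgrad_sum a]
        funext i
        have hb0 : b = 0 := funext hb
        rw [hb0, whitney_xCross_zero i, add_zero]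
      · rintro ⟨φ, hφ, hv⟩
        have hg : pgrad φ = fun i => C (coeff (Finsupp.single i 1) φ) :=
          funext fun i => whitney_pderiv_affine φ hφ i
        rw [← whitney_pcurl_w1 a b, hv, hg, whitney_pcurl_const]
  · -- div part
    rintro v ⟨a, c, rfl⟩
    rw [whitney_pdiv_w2]
    constructor
    · exact ⟨3 * c, rfl⟩
    · constructor
      · intro h0
        have hc : c = 0 := by
          have := whitney_C_inj h0
          linarith
        refine ⟨fun i => C ((fun _ => (0:ℝ)) i) + xCross (fun j => -(a j) / 2) i,
          ⟨fun _ => 0, fun j => -(a j) / 2, rfl⟩, ?_⟩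
        rw [whitney_pcurl_w1]
        funext i
        rw [hc, map_zero, zero_mul, add_zero]
        congr 1
        ring
      · rintro ⟨w, ⟨a', b', rfl⟩, hv⟩
        rw [← whitney_pdiv_w2 a c, hv, whitney_pcurl_w1, whitney_pdiv_const]
  · -- surjectivity
    rintro ψ ⟨c, rfl⟩
    refine ⟨fun i => C ((fun _ => (0:ℝ)) i) + C (c / 3) * X i, ⟨fun _ => 0, c / 3, rfl⟩, ?_⟩
    rw [whitney_pdiv_w2]
    congr 1
    ring
end

section
/- The polynomial de Rham complex of complete polynomial spaces on ℝ³, namely ℝ ⊆ P₃ →(grad) (P₂)³ →(curl) (P₁)³ →(div) P₀ → 0, is exact: the kernel of grad on P₃ is the constants, every curl-free vector field with components in P₂ is the gradient of a polynomial in P₃, every divergence-free vector field with components in P₁ is the curl of a vector field with components in P₂, and div : (P₁)³ → P₀ is surjective. -/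
/-!
The Euler operator `E = ∑ xᵢ ∂ᵢ` multiplies a monomial of degree `d` by `d`, so every
`f : ℕ → ℝ` gives an operator `f(E)`, scaling the monomials of degree `d` by `f d`; it does not
enlarge supports and satisfies `∂ᵢ f(E) = f(E + 1) ∂ᵢ`. The Koszul identities
`grad (x · v) = (E + 1) v` for curl-free `v` and `curl (v × x) = (E + 2) v` for divergence-free `v`
can therefore be inverted degree by degree: `φ = E⁻¹ (x · v)` is a potential of `v` and
`w = (E + 1)⁻¹ (v × x)` a vector potential. This gives exactness in every degree, and the degree
bounds hold because `∂ᵢ` lowers and multiplication by `xᵢ` raises the degree by one.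
-/

open MvPolynomial

namespace MvPolynomial

variable {σ R : Type*}

section CommSemiring

variable [CommSemiring R]

theorem totalDegree_pderiv_le (i : σ) (p : MvPolynomial σ R) :
    (pderiv i p).totalDegree ≤ p.totalDegree - 1 := by
  refine Finset.sup_le fun m hm => ?_
  have hcoeff : coeff (m + Finsupp.single i 1) p ≠ 0 := by
    intro h
    rw [mem_support_iff, coeff_pderiv, h, zero_mul] at hm
    exact hm rfl
  have := le_totalDegree (mem_support_iff.mpr hcoeff)
  change (m + Finsupp.single i 1).degree ≤ _ at this
  rw [map_add, Finsupp.degree_single] at this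
  change m.degree ≤ _
  omega

theorem eq_C_coeff_zero_of_forall_pderiv_eq_zero [NoZeroDivisors R] [CharZero R]
    {p : MvPolynomial σ R} (h : ∀ i, pderiv i p = 0) : p = C (coeff 0 p) := by
  classical
  ext m
  rw [coeff_C]
  split_ifs with hm
  · rw [hm]
  obtain ⟨i, hi⟩ := Finsupp.ne_iff.mp (Ne.symm hm)
  have hm' := Finsupp.sub_add_single_one_cancel (by simpa using hi)
  have := coeff_pderiv (i := i) p (m - Finsupp.single i 1)
  rw [h i, coeff_zero, hm'] at this
  exact (mul_eq_zero.mp this.symm).resolve_right (Nat.cast_add_one_ne_zero _)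

noncomputable def degreeScale (f : ℕ → R) (p : MvPolynomial σ R) : MvPolynomial σ R :=
  ∑ m ∈ p.support, monomial m (f m.degree * coeff m p)

@[simp]
theorem coeff_degreeScale (f : ℕ → R) (p : MvPolynomial σ R) (m : σ →₀ ℕ) :
    coeff m (degreeScale f p) = f m.degree * coeff m p := by
  classical
  simp only [degreeScale, coeff_sum, coeff_monomial, Finset.sum_ite_eq', mem_support_iff,
    ite_not]
  split_ifs with h <;> simp [h]

theorem totalDegree_degreeScale_le (f : ℕ → R) (p : MvPolynomial σ R) :
    (degreeScale f p).totalDegree ≤ p.totalDegree :=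
  totalDegree_le_of_support_subset fun m hm => by
    rw [mem_support_iff, coeff_degreeScale] at hm
    exact mem_support_iff.mpr (right_ne_zero_of_mul hm)

theorem degreeScale_degreeScale_of_mul_eq_one {f g : ℕ → R} (hfg : ∀ n, f n * g n = 1)
    (p : MvPolynomial σ R) : degreeScale f (degreeScale g p) = p := by
  ext m
  rw [coeff_degreeScale, coeff_degreeScale, ← mul_assoc, hfg, one_mul]

theorem pderiv_degreeScale (f : ℕ → R) (i : σ) (p : MvPolynomial σ R) :
    pderiv i (degreeScale f p) = degreeScale (fun n => f (n + 1)) (pderiv i p) := by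
  ext m
  rw [coeff_pderiv, coeff_degreeScale, coeff_degreeScale, coeff_pderiv, map_add,
    Finsupp.degree_single, mul_assoc]

theorem sum_X_mul_pderiv [Fintype σ] (p : MvPolynomial σ R) :
    ∑ i, X i * pderiv i p = degreeScale (fun n => (n : R)) p := by
  classical
  ext m
  simp only [coeff_sum, coeff_X_mul', coeff_pderiv, coeff_degreeScale]
  rw [Finsupp.degree_eq_sum, Nat.cast_sum, Finset.sum_mul]
  refine Finset.sum_congr rfl fun i _ => ?_
  split_ifs with hi
  · have hmi : m i ≠ 0 := Finsupp.mem_support_iff.mp hi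
    rw [Finsupp.sub_add_single_one_cancel hmi, mul_comm, Finsupp.tsub_apply,
      Finsupp.single_eq_same, ← Nat.cast_add_one,
      Nat.sub_add_cancel (Nat.one_le_iff_ne_zero.mpr hmi)]
  · rw [Finsupp.notMem_support_iff.mp hi, Nat.cast_zero, zero_mul]

theorem pderiv_sum_X_mul [Fintype σ] {v : σ → MvPolynomial σ R}
    (hv : ∀ a b, pderiv a (v b) = pderiv b (v a)) (j : σ) :
    pderiv j (∑ i, X i * v i) = degreeScale (fun n => (n : R) + 1) (v j) := by
  classical
  have hkoszul : pderiv j (∑ i, X i * v i) = v j + ∑ i, X i * pderiv i (v j) := by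
    simp only [map_sum, pderiv_mul, pderiv_X, hv j, Pi.single_apply, ite_mul, one_mul, zero_mul,
      Finset.sum_add_distrib, Finset.sum_ite_eq', Finset.mem_univ, if_true]
  rw [hkoszul, sum_X_mul_pderiv]
  ext m
  simp [add_mul, add_comm]

theorem totalDegree_sum_X_mul_le [Fintype σ] {v : σ → MvPolynomial σ R} {n : ℕ}
    (hdeg : ∀ i, (v i).totalDegree ≤ n) : (∑ i, X i * v i).totalDegree ≤ n + 1 := by
  refine (totalDegree_finsetSum _ _).trans (Finset.sup_le fun i _ => ?_)
  have hX : (X i : MvPolynomial σ R).totalDegree ≤ 1 :=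
    (totalDegree_monomial_le _ _).trans (by simp)
  linarith [totalDegree_mul (X i) (v i), hdeg i]

end CommSemiring

theorem degreeScale_sub [CommRing R] (f : ℕ → R) (p q : MvPolynomial σ R) :
    degreeScale f (p - q) = degreeScale f p - degreeScale f q := by
  ext m
  simp only [coeff_degreeScale, coeff_sub, mul_sub]

theorem exists_totalDegree_le_forall_pderiv_eq [Fintype σ] {K : Type*} [Field K] [CharZero K]
    {v : σ → MvPolynomial σ K} {n : ℕ} (hdeg : ∀ i, (v i).totalDegree ≤ n)
    (hv : ∀ a b, pderiv a (v b) = pderiv b (v a)) :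
    ∃ φ : MvPolynomial σ K, φ.totalDegree ≤ n + 1 ∧ ∀ j, pderiv j φ = v j := by
  refine ⟨degreeScale (fun d => (d : K)⁻¹) (∑ i, X i * v i),
    (totalDegree_degreeScale_le _ _).trans (totalDegree_sum_X_mul_le hdeg), fun j => ?_⟩
  rw [pderiv_degreeScale, pderiv_sum_X_mul hv, degreeScale_degreeScale_of_mul_eq_one]
  intro d
  rw [Nat.cast_add_one]
  exact inv_mul_cancel₀ (Nat.cast_add_one_ne_zero d)

end MvPolynomial

lemma pderiv_symm_of_pcurl_eq_zero {v : Fin 3 → RP3} (h : pcurl v = 0) (a b : Fin 3) :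
    pderiv a (v b) = pderiv b (v a) := by
  have h0 := congrFun h 0
  have h1 := congrFun h 1
  have h2 := congrFun h 2
  simp only [pcurl, Matrix.cons_val, Pi.zero_apply, sub_eq_zero] at h0 h1 h2
  fin_cases a <;> fin_cases b <;> simp [h0, h1, h2]

lemma totalDegree_pcurl_le {v : Fin 3 → RP3} {n : ℕ} (hv : ∀ i, (v i).totalDegree ≤ n)
    (k : Fin 3) : (pcurl v k).totalDegree ≤ n - 1 := by
  have hd : ∀ i j, (pderiv i (v j)).totalDegree ≤ n - 1 := fun i j =>
    (totalDegree_pderiv_le i (v j)).trans (Nat.sub_le_sub_right (hv j) 1)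
  fin_cases k <;> exact (totalDegree_sub _ _).trans (max_le (hd _ _) (hd _ _))

lemma totalDegree_pdiv_le {v : Fin 3 → RP3} {n : ℕ} (hv : ∀ i, (v i).totalDegree ≤ n) :
    (pdiv v).totalDegree ≤ n - 1 :=
  (totalDegree_finsetSum _ _).trans <| Finset.sup_le fun i _ =>
    (totalDegree_pderiv_le i (v i)).trans (Nat.sub_le_sub_right (hv i) 1)

lemma pcurl_degreeScale (f : ℕ → ℝ) (u : Fin 3 → RP3) :
    pcurl (fun j => degreeScale f (u j)) =
      fun k => degreeScale (fun n => f (n + 1)) (pcurl u k) := by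
  funext k
  fin_cases k <;> simp [pcurl, pderiv_degreeScale, degreeScale_sub]

/-- The Koszul operator on `2`-forms, `v ↦ v × x`. -/
noncomputable def crossX (v : Fin 3 → RP3) : Fin 3 → RP3 :=
  ![v 1 * X 2 - v 2 * X 1, v 2 * X 0 - v 0 * X 2, v 0 * X 1 - v 1 * X 0]

lemma pcurl_crossX (v : Fin 3 → RP3) (k : Fin 3) :
    pcurl (crossX v) k = 2 * v k + ∑ i, X i * pderiv i (v k) - X k * pdiv v := by
  fin_cases k <;>
  · simp [pcurl, crossX, pdiv, Fin.sum_univ_three, pderiv_X]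
    ring

lemma totalDegree_crossX_le {v : Fin 3 → RP3} {n : ℕ} (hv : ∀ i, (v i).totalDegree ≤ n)
    (k : Fin 3) : (crossX v k).totalDegree ≤ n + 1 := by
  have hd : ∀ i j, (v i * X j).totalDegree ≤ n + 1 := fun i j => by
    linarith [totalDegree_mul (v i) (X j), totalDegree_X (R := ℝ) j, hv i]
  fin_cases k <;> exact (totalDegree_sub _ _).trans (max_le (hd _ _) (hd _ _))

lemma pcurl_crossX_of_pdiv_eq_zero {v : Fin 3 → RP3} (hv : pdiv v = 0) :
    pcurl (crossX v) = fun k => degreeScale (fun d => (d : ℝ) + 2) (v k) := by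
  funext k
  rw [pcurl_crossX, hv, mul_zero, sub_zero, sum_X_mul_pderiv]
  ext m
  rw [← map_ofNat C 2, coeff_add, coeff_C_mul, coeff_degreeScale, coeff_degreeScale]
  ring

theorem exists_pcurl_eq_of_pdiv_eq_zero {v : Fin 3 → RP3} {n : ℕ}
    (hdeg : ∀ i, (v i).totalDegree ≤ n) (hv : pdiv v = 0) :
    ∃ w : Fin 3 → RP3, (∀ i, (w i).totalDegree ≤ n + 1) ∧ pcurl w = v := by
  refine ⟨fun j => degreeScale (fun d => ((d : ℝ) + 1)⁻¹) (crossX v j),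
    fun i => (totalDegree_degreeScale_le _ _).trans (totalDegree_crossX_le hdeg i), ?_⟩
  rw [pcurl_degreeScale, pcurl_crossX_of_pdiv_eq_zero hv]
  funext k
  refine degreeScale_degreeScale_of_mul_eq_one (fun d => ?_) (v k)
  rw [Nat.cast_add_one, add_assoc, one_add_one_eq_two]
  exact inv_mul_cancel₀ (by positivity)

/-- Exactness of the complete polynomial de Rham complex
`ℝ ⊆ P₃ → (P₂)³ → (P₁)³ → P₀ → 0` on ℝ³. -/
theorem complete_polynomial_complex_exact :
    (∀ φ : RP3, φ.totalDegree ≤ 3 →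
      (∀ i, (pgrad φ i).totalDegree ≤ 2) ∧ (pgrad φ = 0 ↔ ∃ c : ℝ, φ = C c))
    ∧ (∀ v : Fin 3 → RP3, (∀ i, (v i).totalDegree ≤ 2) →
      (∀ i, (pcurl v i).totalDegree ≤ 1) ∧
        (pcurl v = 0 → ∃ φ : RP3, φ.totalDegree ≤ 3 ∧ v = pgrad φ))
    ∧ (∀ v : Fin 3 → RP3, (∀ i, (v i).totalDegree ≤ 1) →
      (pdiv v).totalDegree = 0 ∧
        (pdiv v = 0 → ∃ w : Fin 3 → RP3, (∀ i, (w i).totalDegree ≤ 2) ∧ v = pcurl w))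
    ∧ (∀ c : ℝ, ∃ v : Fin 3 → RP3, (∀ i, (v i).totalDegree ≤ 1) ∧ pdiv v = C c) := by
  refine ⟨fun φ hφ => ⟨fun i => ?_, ⟨fun h => ?_, ?_⟩⟩, fun v hv => ⟨fun i => ?_, fun h => ?_⟩,
    fun v hv => ⟨?_, fun h => ?_⟩, fun c => ?_⟩
  · exact (totalDegree_pderiv_le i φ).trans (by omega)
  · exact ⟨_, eq_C_coeff_zero_of_forall_pderiv_eq_zero (congrFun h)⟩
  · rintro ⟨c, rfl⟩
    funext i
    exact pderiv_C
  · exact (totalDegree_pcurl_le hv i).trans (by omega)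
  · obtain ⟨φ, hφ, hgrad⟩ :=
      exists_totalDegree_le_forall_pderiv_eq hv (pderiv_symm_of_pcurl_eq_zero h)
    exact ⟨φ, hφ, (funext hgrad).symm⟩
  · exact Nat.le_zero.mp ((totalDegree_pdiv_le hv).trans (by omega))
  · obtain ⟨w, hw, hcurl⟩ := exists_pcurl_eq_of_pdiv_eq_zero hv h
    exact ⟨w, hw, hcurl.symm⟩
  · refine ⟨![C c * X 0, 0, 0], fun i => ?_, ?_⟩
    · fin_cases i
      · exact (totalDegree_mul _ _).trans (by simp)
      all_goals simp
    · simp [pdiv, Fin.sum_univ_three]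
end

section
/- Let k ≥ 0 and let w be a polynomial vector field on ℝ³ with components of total degree at most k satisfying div w = 0. Then there exists a polynomial vector field u with components of total degree at most k+1 such that w = curl u. -/
/-!
Take `u = (∫₀ᶻ w₂ dz - ∫₀ʸ w₃(x, y, 0) dy, -∫₀ᶻ w₁ dz, 0)`, the integrals being the
antiderivatives of polynomials that vanish on the corresponding coordinate plane. The first two
components of `curl u` are `w₁` and `w₂` since the `y`-integral does not depend on `z`. The third is
`-∫₀ᶻ (∂₁w₁ + ∂₂w₂) dz + w₃(x, y, 0) = ∫₀ᶻ ∂₃w₃ dz + w₃(x, y, 0) = w₃`, by `div w = 0` and the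
fundamental theorem of calculus. Each integration raises the degree by at most one.
-/

open MvPolynomial

namespace MvPolynomial

variable {σ R K : Type*} [CommSemiring R] [Field K]

theorem basisMonomials_constr_monomial (f : (σ →₀ ℕ) → MvPolynomial σ R) (m : σ →₀ ℕ)
    (a : R) :
    (basisMonomials σ R).constr R f (monomial m a) = a • f m := by
  have hm : monomial m a = a • (basisMonomials σ R) m := by
    rw [coe_basisMonomials, smul_monomial, smul_eq_mul, mul_one]
  rw [hm, map_smul, Module.Basis.constr_basis]

theorem totalDegree_map_le_of_monomial {f : MvPolynomial σ R →ₗ[R] MvPolynomial σ R} {d : ℕ}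
    (hf : ∀ m, (f (monomial m 1)).totalDegree ≤ m.degree + d) (p : MvPolynomial σ R) :
    (f p).totalDegree ≤ p.totalDegree + d := by
  conv_lhs => rw [p.as_sum]
  rw [map_sum]
  refine (totalDegree_finsetSum _ _).trans (Finset.sup_le fun m hm => ?_)
  rw [← mul_one (coeff m p), ← smul_eq_mul, ← smul_monomial, map_smul]
  exact (totalDegree_smul_le _ _).trans ((hf m).trans (by gcongr; exact le_totalDegree hm))

noncomputable def antideriv (i : σ) : MvPolynomial σ K →ₗ[K] MvPolynomial σ K :=
  (basisMonomials σ K).constr K fun m => monomial (m + Finsupp.single i 1) (m i + 1 : K)⁻¹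

noncomputable def evalVarZero (i : σ) : MvPolynomial σ R →ₗ[R] MvPolynomial σ R :=
  (basisMonomials σ R).constr R fun m => if m i = 0 then monomial m 1 else 0

theorem antideriv_monomial (i : σ) (m : σ →₀ ℕ) (a : K) :
    antideriv i (monomial m a) = monomial (m + Finsupp.single i 1) (a / (m i + 1)) := by
  rw [antideriv, basisMonomials_constr_monomial, smul_monomial, smul_eq_mul, div_eq_mul_inv]

theorem evalVarZero_monomial (i : σ) (m : σ →₀ ℕ) (a : R) :
    evalVarZero i (monomial m a) = if m i = 0 then monomial m a else 0 := by
  rw [evalVarZero, basisMonomials_constr_monomial]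
  split_ifs <;> simp [smul_monomial]

theorem totalDegree_antideriv_le (i : σ) (p : MvPolynomial σ K) :
    (antideriv i p).totalDegree ≤ p.totalDegree + 1 :=
  totalDegree_map_le_of_monomial (fun m => by
    rw [antideriv_monomial]
    refine (totalDegree_monomial_le _ _).trans_eq ?_
    change Finsupp.degree (m + Finsupp.single i 1) = _
    rw [map_add, Finsupp.degree_single]) p

theorem totalDegree_evalVarZero_le (i : σ) (p : MvPolynomial σ R) :
    (evalVarZero i p).totalDegree ≤ p.totalDegree :=
  totalDegree_map_le_of_monomial (d := 0) (fun m => by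
    rw [evalVarZero_monomial]
    split_ifs
    · exact totalDegree_monomial_le _ _
    · simp) p

theorem pderiv_evalVarZero_self (i : σ) (p : MvPolynomial σ R) :
    pderiv i (evalVarZero i p) = 0 := by
  induction p using MvPolynomial.induction_on' with
  | monomial m a =>
    rw [evalVarZero_monomial]
    split_ifs with hm
    · simp [pderiv_monomial, hm]
    · exact map_zero _
  | add p q hp hq => rw [map_add, map_add, hp, hq, add_zero]

theorem pderiv_antideriv_of_ne {i j : σ} (h : j ≠ i) (p : MvPolynomial σ K) :
    pderiv j (antideriv i p) = antideriv i (pderiv j p) := by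
  classical
  induction p using MvPolynomial.induction_on' with
  | monomial m a =>
    rw [antideriv_monomial, pderiv_monomial, pderiv_monomial, antideriv_monomial]
    have hj : (m + Finsupp.single i 1 : σ →₀ ℕ) j = m j := by simp [h.symm]
    have hi : (m - Finsupp.single j 1 : σ →₀ ℕ) i = m i := by simp [h]
    have hswap : m + Finsupp.single i 1 - Finsupp.single j 1
        = m - Finsupp.single j 1 + Finsupp.single i 1 := by
      ext x
      simp only [Finsupp.tsub_apply, Finsupp.add_apply, Finsupp.single_apply]
      split_ifs <;> subst_vars <;> first | omega | exact absurd rfl h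
    rw [hj, hi, hswap]
    ring_nf
  | add p q hp hq => rw [map_add, map_add, hp, hq, map_add, map_add]

variable [CharZero K]

theorem pderiv_antideriv_self (i : σ) (p : MvPolynomial σ K) :
    pderiv i (antideriv i p) = p := by
  induction p using MvPolynomial.induction_on' with
  | monomial m a =>
    rw [antideriv_monomial, pderiv_monomial, add_tsub_cancel_right]
    congr 1
    simp only [Finsupp.add_apply, Finsupp.single_eq_same, Nat.cast_add, Nat.cast_one]
    field_simp
  | add p q hp hq => rw [map_add, map_add, hp, hq]

theorem antideriv_pderiv_self (i : σ) (p : MvPolynomial σ K) :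
    antideriv i (pderiv i p) = p - evalVarZero i p := by
  induction p using MvPolynomial.induction_on' with
  | monomial m a =>
    rw [pderiv_monomial, antideriv_monomial, evalVarZero_monomial]
    split_ifs with hm
    · simp [hm]
    · obtain ⟨n, hn⟩ := Nat.exists_eq_succ_of_ne_zero hm
      have hsub : (m - Finsupp.single i 1 : σ →₀ ℕ) i = n := by simp [hn]
      rw [hsub, tsub_add_cancel_of_le (Finsupp.single_le_iff.mpr (by omega)), sub_zero, hn]
      congr 1
      push_cast
      field_simp
  | add p q hp hq => rw [map_add, map_add, hp, hq, map_add]; abel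

end MvPolynomial

noncomputable def curlPotential (w : Fin 3 → RP3) : Fin 3 → RP3 :=
  ![antideriv 2 (w 1) - antideriv 1 (evalVarZero 2 (w 2)), -antideriv 2 (w 0), 0]

theorem totalDegree_curlPotential_le {k : ℕ} {w : Fin 3 → RP3}
    (hdeg : ∀ i, (w i).totalDegree ≤ k) (i : Fin 3) :
    (curlPotential w i).totalDegree ≤ k + 1 := by
  have hanti (i j : Fin 3) : (antideriv i (w j)).totalDegree ≤ k + 1 :=
    (totalDegree_antideriv_le _ _).trans (by gcongr; exact hdeg j)
  fin_cases i
  · refine (totalDegree_sub _ _).trans (max_le (hanti 2 1) ?_)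
    exact (totalDegree_antideriv_le _ _).trans
      (by gcongr; exact (totalDegree_evalVarZero_le _ _).trans (hdeg 2))
  · simpa [curlPotential, totalDegree_neg] using hanti 2 0
  · simp [curlPotential]

theorem pcurl_curlPotential {w : Fin 3 → RP3} (hdiv : pdiv w = 0) :
    pcurl (curlPotential w) = w := by
  have hdiv_xy : pderiv 0 (w 0) + pderiv 1 (w 1) = -pderiv 2 (w 2) := by
    rw [pdiv, Fin.sum_univ_three] at hdiv
    linear_combination hdiv
  have hz : antideriv 2 (pderiv 0 (w 0)) + antideriv 2 (pderiv 1 (w 1))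
      = evalVarZero 2 (w 2) - w 2 := by
    rw [← map_add, hdiv_xy, map_neg, antideriv_pderiv_self, neg_sub]
  ext1 i
  fin_cases i
  · simp [pcurl, curlPotential, pderiv_antideriv_self]
  · simp [pcurl, curlPotential, pderiv_antideriv_self, pderiv_antideriv_of_ne,
      pderiv_evalVarZero_self]
  · change pderiv 0 (-antideriv 2 (w 0))
      - pderiv 1 (antideriv 2 (w 1) - antideriv 1 (evalVarZero 2 (w 2))) = w 2
    rw [map_neg, map_sub, pderiv_antideriv_of_ne (by decide), pderiv_antideriv_of_ne (by decide),
      pderiv_antideriv_self]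
    linear_combination -hz

/-- Polynomial Poincaré lemma for the curl–div segment: a divergence-free
polynomial vector field of degree at most `k` is the curl of a polynomial
vector field of degree at most `k + 1`. -/
theorem poly_poincare_curl_div (k : ℕ) (w : Fin 3 → RP3)
    (hdeg : ∀ i, (w i).totalDegree ≤ k) (hdiv : pdiv w = 0) :
    ∃ u : Fin 3 → RP3, (∀ i, (u i).totalDegree ≤ k + 1) ∧ w = pcurl u :=
  ⟨curlPotential w, totalDegree_curlPotential_le hdeg, (pcurl_curlPotential hdiv).symm⟩
end

section
/- Let ℓ₁, ℓ₂, ℓ₃ be three affine (degree ≤ 1) polynomials on ℝ² that are pairwise non-proportional and each non-constant (so their zero sets are three pairwise distinct lines). If a polynomial p on ℝ² vanishes identically on each of the three lines {ℓ_i = 0}, then ℓ₁ℓ₂ℓ₃ divides p; that is, p = ℓ₁ℓ₂ℓ₃ q for some polynomial q with deg q ≤ deg p − 3. -/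
/-!
A polynomial of total degree one is irreducible, hence prime in the factorial ring `K[x₁, …, xₙ]`.
If `p` vanishes on the zero set of such an `ℓ`, choose a variable in which `ℓ` has degree one
and view `p` as a polynomial in that variable over the others: `ℓ` is then a unit times a monic
linear polynomial `X - c`, and `c` is a root of `p` because a polynomial over an infinite field
that vanishes everywhere is zero. So each `ℓᵢ ∣ p`; non-proportional lines of the same degree
are non-associated primes, hence pairwise coprime, so their product divides `p`.
-/

open MvPolynomial

namespace MvPolynomial

theorem exists_degreeOf_eq_one_of_totalDegree_eq_one {σ R : Type*} [CommSemiring R]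
    {l : MvPolynomial σ R} (hl : l.totalDegree = 1) : ∃ i, l.degreeOf i = 1 := by
  have hsupp : l.support.Nonempty := by
    rw [Finset.nonempty_iff_ne_empty, ne_eq, support_eq_empty]
    rintro rfl
    simp at hl
  obtain ⟨d, hd, hdeg⟩ := l.support.exists_mem_eq_sup hsupp fun s => s.sum fun _ e => e
  obtain ⟨i, hi⟩ : ∃ i, d i ≠ 0 := by
    by_contra! h
    have : d = 0 := Finsupp.ext h
    simp [totalDegree, hdeg, this] at hl
  exact ⟨i, le_antisymm (hl ▸ degreeOf_le_totalDegree l i)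
    (Nat.one_le_iff_ne_zero.mpr hi |>.trans (monomial_le_degreeOf i hd))⟩

theorem exists_eq_C_mul_of_dvd_of_totalDegree_le {σ R : Type*} [CommRing R] [IsDomain R]
    {f g : MvPolynomial σ R} (h : f ∣ g) (hg : g ≠ 0) (hdeg : g.totalDegree ≤ f.totalDegree) :
    ∃ c, g = C c * f := by
  obtain ⟨u, rfl⟩ := h
  have hu : u ≠ 0 := right_ne_zero_of_mul hg
  rw [totalDegree_mul_of_isDomain (left_ne_zero_of_mul hg) hu] at hdeg
  exact ⟨u.coeff 0, by rw [mul_comm, ← totalDegree_eq_zero_iff_eq_C.mp (by omega)]⟩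

section Field

variable {K : Type*} [Field K]

theorem prime_of_totalDegree_eq_one {σ : Type*} {l : MvPolynomial σ K}
    (hl : l.totalDegree = 1) : Prime l := by
  refine (irreducible_of_totalDegree_eq_one hl fun x hx => ?_).prime
  obtain ⟨d, hd⟩ : ∃ d, l.coeff d ≠ 0 := ne_zero_iff.mp (by rintro rfl; simp at hl)
  exact isUnit_iff_ne_zero.mpr (ne_zero_of_dvd_ne_zero hd (hx d))

variable {n : ℕ}

theorem exists_finSuccEquiv_eq_C_mul_X_sub_C {l : MvPolynomial (Fin (n + 1)) K}
    (hl : l.totalDegree = 1) (h0 : l.degreeOf 0 = 1) :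
    ∃ a ≠ (0 : K), ∃ c,
      finSuccEquiv K n l = Polynomial.C (C a) * (Polynomial.X - Polynomial.C c) := by
  set L := finSuccEquiv K n l
  have hL : L.natDegree = 1 := by rw [natDegree_finSuccEquiv, h0]
  have hlead : L.coeff 1 ≠ 0 := by
    rw [← hL, Polynomial.coeff_natDegree, Ne, Polynomial.leadingCoeff_eq_zero]
    rintro h
    simp [h] at hL
  have hcoeff : (L.coeff 1).totalDegree + 1 ≤ l.totalDegree :=
    totalDegree_coeff_finSuccEquiv_add_le l 1 hlead
  obtain ⟨a, ha⟩ : ∃ a, L.coeff 1 = C a := ⟨_, totalDegree_eq_zero_iff_eq_C.mp (by omega)⟩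
  have ha0 : a ≠ 0 := by rintro rfl; simp [ha] at hlead
  refine ⟨a, ha0, -(C a⁻¹ * L.coeff 0), ?_⟩
  conv_lhs => rw [Polynomial.eq_X_add_C_of_natDegree_le_one hL.le, ha]
  rw [mul_sub, ← Polynomial.C_mul, mul_neg, ← mul_assoc, ← C_mul, mul_inv_cancel₀ ha0, C_1,
    one_mul, map_neg, sub_neg_eq_add]

variable [Infinite K]

theorem dvd_of_eval_eq_zero_of_degreeOf_zero_eq_one {l p : MvPolynomial (Fin (n + 1)) K}
    (hl : l.totalDegree = 1) (h0 : l.degreeOf 0 = 1)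
    (hvan : ∀ v, eval v l = 0 → eval v p = 0) : l ∣ p := by
  obtain ⟨a, ha0, c, hlc⟩ := exists_finSuccEquiv_eq_C_mul_X_sub_C hl h0
  have hroot : (finSuccEquiv K n p).IsRoot c := by
    refine MvPolynomial.funext fun s => ?_
    have hl0 : eval (Fin.cons (eval s c) s) l = 0 := by
      simp [eval_eq_eval_mv_eval', hlc]
    rw [map_zero, ← Polynomial.eval_map_apply, ← eval_eq_eval_mv_eval', hvan _ hl0]
  have hunit : IsUnit (Polynomial.C (C a) : Polynomial (MvPolynomial (Fin n) K)) :=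
    (isUnit_iff_ne_zero.mpr ha0).map (Polynomial.C.comp C)
  rw [← map_dvd_iff (finSuccEquiv K n), hlc, hunit.mul_left_dvd]
  exact Polynomial.dvd_iff_isRoot.mpr hroot

theorem dvd_of_eval_eq_zero_of_totalDegree_eq_one {l p : MvPolynomial (Fin (n + 1)) K}
    (hl : l.totalDegree = 1) (hvan : ∀ v, eval v l = 0 → eval v p = 0) : l ∣ p := by
  obtain ⟨i, hi⟩ := exists_degreeOf_eq_one_of_totalDegree_eq_one hl
  set τ := renameEquiv K (Equiv.swap 0 i)
  rw [← map_dvd_iff τ]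
  refine dvd_of_eval_eq_zero_of_degreeOf_zero_eq_one (by rwa [totalDegree_renameEquiv]) ?_ ?_
  · simpa [τ, hi] using degreeOf_rename_of_injective (p := l) (Equiv.swap 0 i).injective i
  · intro v
    simpa only [τ, renameEquiv_apply, eval_rename] using hvan _

end Field

end MvPolynomial

/-- If `ℓ₀, ℓ₁, ℓ₂` are affine polynomials on ℝ² of degree exactly 1 that are
pairwise non-proportional, and a polynomial `p` vanishes on each of the three
lines `{ℓᵢ = 0}`, then `ℓ₀ℓ₁ℓ₂` divides `p`, with quotient of degree at most
`deg p − 3`. -/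
theorem triangle_bubble_factorization (l : Fin 3 → MvPolynomial (Fin 2) ℝ)
    (hdeg : ∀ i, (l i).totalDegree = 1)
    (hprop : ∀ i j : Fin 3, i ≠ j → ∀ c : ℝ, l i ≠ C c * l j)
    (p : MvPolynomial (Fin 2) ℝ)
    (hvan : ∀ i : Fin 3, ∀ v : Fin 2 → ℝ, eval v (l i) = 0 → eval v p = 0) :
    ∃ q : MvPolynomial (Fin 2) ℝ,
      p = l 0 * l 1 * l 2 * q ∧ q.totalDegree ≤ p.totalDegree - 3 := by
  have hprime i := prime_of_totalDegree_eq_one (hdeg i)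
  have hl0 i : l i ≠ 0 := (hprime i).ne_zero
  have hcoprime i j (hij : i ≠ j) : IsRelPrime (l i) (l j) := by
    refine (hprime i).irreducible.isRelPrime_iff_not_dvd.mpr fun hdvd => ?_
    obtain ⟨c, hc⟩ := exists_eq_C_mul_of_dvd_of_totalDegree_le hdvd (hl0 j)
      (by rw [hdeg, hdeg])
    exact hprop j i hij.symm c hc
  have hdvd i : l i ∣ p := dvd_of_eval_eq_zero_of_totalDegree_eq_one (hdeg i) (hvan i)
  obtain ⟨q, hq⟩ : l 0 * l 1 * l 2 ∣ p :=
    ((hcoprime 0 2 (by decide)).mul_left (hcoprime 1 2 (by decide))).mul_dvd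
      ((hcoprime 0 1 (by decide)).mul_dvd (hdvd 0) (hdvd 1)) (hdvd 2)
  refine ⟨q, hq, ?_⟩
  rcases eq_or_ne q 0 with rfl | hq0
  · simp
  rw [hq, totalDegree_mul_of_isDomain (by simp [hl0]) hq0, totalDegree_mul_of_isDomain
    (by simp [hl0]) (hl0 2), totalDegree_mul_of_isDomain (hl0 0) (hl0 1), hdeg, hdeg, hdeg]
  omega
end
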